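/- arXiv:1301.7356 — 4 statements merged into one kernel-verified Lean document; each statement's English description precedes it below -/
import Mathlib

section
/- Let u and w be distinct vertices of the polytope P = {x ∈ R^N : x ≥ 0, A x = a}, and let A' be the submatrix of A on the columns indexed by supp(u) ∪ supp(w). Then u and w are the endpoints of an edge (one-dimensional face) of P if and only if the nullity of A' equals 1. -/
open scoped Classical

/-- The nullity of a real matrix. -/
noncomputable def nullity {α β : Type} [Fintype β] (A : Matrix α β ℝ) : ℕ :=
  Module.finrank ℝ (LinearMap.ker (Matrix.mulVecLin A))

/-- The polyhedron `{x ≥ 0 : A x = a}`. -/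
def stdPolytope {M N : Type} [Fintype N] (A : Matrix M N ℝ) (a : M → ℝ) :
    Set (N → ℝ) :=
  {x | (∀ i, 0 ≤ x i) ∧ A.mulVec x = a}

/-- The support of a set of vectors. -/
def setSupp {N : Type} (X : Set (N → ℝ)) : Set N := {i | ∃ x ∈ X, x i ≠ 0}

/-- The submatrix of `A` on the columns indexed by `S`. -/
def colSub {M N : Type} (A : Matrix M N ℝ) (S : Set N) : Matrix M S ℝ :=
  A.submatrix id (Subtype.val)

/-- The dimension of a subset of a real vector space: the dimension of
the direction of its affine span. -/
noncomputable def setDim {N : Type} (F : Set (N → ℝ)) : ℕ :=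
  Module.finrank ℝ (affineSpan ℝ F).direction

/-!
Let `S = supp u ∪ supp w`. The vectors `z` with `A z = 0` that vanish off `S` form a space
isomorphic to `ker A'`, and it contains `u - w`; so the nullity of `A'` is one iff this space is
the line `ℝ (u - w)`.

If `F` is an edge with vertices `u, w`, the midpoint `m` of `[u, w]` is positive on `S`, so
`m ± ε z ∈ P` for every such `z`; since `F` is a face containing `m`, `z` lies in the direction of
`F`, which is `ℝ (u - w)`. Conversely, the face `{x ∈ P | x = 0 off S}`, exposed by
`x ↦ -∑_{i ∉ S} x i`, lies in `u + ℝ (u - w)`, and a point of `P` on that line outside `[u, w]`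
would put `u` or `w` in the interior of a segment of `P`; so this face is the segment `[u, w]`.
-/

open Matrix Topology

theorem Submodule.finrank_eq_one_iff_le_span_singleton {K V : Type*} [DivisionRing K]
    [AddCommGroup V] [Module K V] {W : Submodule K V} {v : V} (hv : v ∈ W) (hv0 : v ≠ 0) :
    Module.finrank K W = 1 ↔ W ≤ K ∙ v := by
  have hspan : K ∙ v ≤ W := (Submodule.span_singleton_le_iff_mem v W).mpr hv
  constructor
  · intro h
    have : FiniteDimensional K W := Module.finite_of_finrank_eq_succ h
    exact (Submodule.eq_of_le_of_finrank_eq hspan (by rw [finrank_span_singleton hv0, h])).ge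
  · intro h
    rw [le_antisymm h hspan, finrank_span_singleton hv0]

theorem IsExtreme.mem_vectorSpan_of_eventually_add_smul_mem {E : Type*} [AddCommGroup E]
    [Module ℝ E] {C F : Set E} (hF : IsExtreme ℝ C F) {x z : E} (hx : x ∈ F)
    (h : ∀ᶠ t in 𝓝 (0 : ℝ), x + t • z ∈ C) : z ∈ vectorSpan ℝ F := by
  obtain ⟨ε, hε, hball⟩ := Metric.eventually_nhds_iff.mp h
  have hmem : ∀ s, |s| < ε → x + s • z ∈ C := fun s hs => hball (by simpa using hs)
  have hp := hmem (ε / 2) (by rw [abs_of_pos (by positivity)]; linarith)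
  have hq := hmem (-(ε / 2)) (by rw [abs_neg, abs_of_pos (by positivity)]; linarith)
  have hx_mid : x ∈ openSegment ℝ (x + (ε / 2) • z) (x + (-(ε / 2)) • z) :=
    ⟨1 / 2, 1 / 2, by norm_num, by norm_num, by norm_num, by module⟩
  have hdiff := vsub_mem_vectorSpan ℝ (hF.left_mem_of_mem_openSegment hp hq hx hx_mid)
    (hF.right_mem_of_mem_openSegment hp hq hx hx_mid)
  have hε_smul : (x + (ε / 2) • z) -ᵥ (x + (-(ε / 2)) • z) = ε • z := by
    rw [vsub_eq_sub]; module
  rw [hε_smul] at hdiff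
  simpa [smul_smul, inv_mul_cancel₀ hε.ne'] using Submodule.smul_mem _ ε⁻¹ hdiff

theorem mem_segment_of_mem_affineSpan_pair {E : Type*} [AddCommGroup E] [Module ℝ E]
    {C : Set E} {u w x : E} (hu : u ∈ C.extremePoints ℝ) (hw : w ∈ C.extremePoints ℝ)
    (hx : x ∈ C) (hline : x ∈ line[ℝ, u, w]) : x ∈ segment ℝ u w := by
  rcases eq_or_ne u w with rfl | huw
  · rw [Set.pair_eq_singleton, AffineSubspace.mem_affineSpan_singleton] at hline
    simp [hline]
  rcases (collinear_insert_of_mem_affineSpan_pair hline).wbtw_or_wbtw_or_wbtw with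
    hxuw | huwx | hwxu
  · rcases (mem_extremePoints_iff_forall_segment.mp hu).2 x hx w hw.1 hxuw.mem_segment with
      rfl | rfl
    exacts [left_mem_segment ℝ _ _, absurd rfl huw]
  · rcases (mem_extremePoints_iff_forall_segment.mp hw).2 u hu.1 x hx huwx.mem_segment with
      rfl | rfl
    exacts [absurd rfl huw, right_mem_segment ℝ _ _]
  · exact segment_symm ℝ u w ▸ hwxu.mem_segment

theorem IsExtreme.extremePoints_segment_eq_pair {E : Type*} [AddCommGroup E] [Module ℝ E]
    {C : Set E} {u w : E} (hF : IsExtreme ℝ C (segment ℝ u w)) (hu : u ∈ C.extremePoints ℝ)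
    (hw : w ∈ C.extremePoints ℝ) : (segment ℝ u w).extremePoints ℝ = {u, w} := by
  rw [hF.extremePoints_eq]
  ext x
  constructor
  · rintro ⟨hx, hxC⟩
    rcases (mem_extremePoints_iff_forall_segment.mp hxC).2 u hu.1 w hw.1 hx with rfl | rfl
    exacts [Or.inl rfl, Or.inr rfl]
  · rintro (rfl | rfl)
    exacts [⟨left_mem_segment ℝ _ _, hu⟩, ⟨right_mem_segment ℝ _ _, hw⟩]

theorem setDim_segment {N : Type} {u w : N → ℝ} (huw : u ≠ w) : setDim (segment ℝ u w) = 1 := by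
  rw [setDim, ← convexHull_pair, affineSpan_convexHull, direction_affineSpan, vectorSpan_pair]
  exact finrank_span_singleton (vsub_ne_zero.mpr huw)

def vanishingOff {N : Type} (S : Set N) : Submodule ℝ (N → ℝ) :=
  Submodule.pi Sᶜ fun _ => ⊥

@[simp]
theorem mem_vanishingOff {N : Type} {S : Set N} {x : N → ℝ} :
    x ∈ vanishingOff S ↔ ∀ i ∉ S, x i = 0 := by
  simp [vanishingOff, Submodule.mem_pi]

theorem colSub_mulVec_restrict {M N : Type} [Fintype N] (A : Matrix M N ℝ) {S : Set N}
    [DecidablePred (· ∈ S)] {x : N → ℝ} (hx : x ∈ vanishingOff S) :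
    colSub A S *ᵥ (fun i : S => x i) = A *ᵥ x := by
  funext j
  exact (Finset.sum_congr_set S _ _ (fun _ _ => rfl)
    fun i hi => by simp [mem_vanishingOff.mp hx i hi]).symm

theorem nullity_colSub {M N : Type} [Fintype N] (A : Matrix M N ℝ) (S : Set N)
    [DecidablePred (· ∈ S)] :
    nullity (colSub A S) = Module.finrank ℝ ↥(LinearMap.ker A.mulVecLin ⊓ vanishingOff S) := by
  let e := Function.ExtendByZero.linearMap ℝ (Subtype.val : S → N)
  have he : Function.Injective e := Function.extend_injective Subtype.val_injective (0 : N → ℝ)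
  have hrestrict : ∀ z, (fun i : S => e z i) = z := fun z =>
    funext (Subtype.val_injective.extend_apply z 0)
  have hoff : ∀ z, ∀ i ∉ S, e z i = 0 := fun z i hi =>
    Function.extend_apply' _ _ _ fun ⟨j, hj⟩ => hi (hj ▸ j.2)
  have he_vanish : ∀ z, e z ∈ vanishingOff S := fun z => mem_vanishingOff.mpr (hoff z)
  have hmap : (LinearMap.ker (colSub A S).mulVecLin).map e =
      LinearMap.ker A.mulVecLin ⊓ vanishingOff S := by
    ext x
    simp only [Submodule.mem_map, LinearMap.mem_ker, Matrix.mulVecLin_apply, Submodule.mem_inf]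
    constructor
    · rintro ⟨z, hz, rfl⟩
      refine ⟨?_, he_vanish z⟩
      rwa [← colSub_mulVec_restrict A (he_vanish z), hrestrict]
    · rintro ⟨hx, hxS⟩
      refine ⟨fun i : S => x i, by rwa [colSub_mulVec_restrict A hxS], ?_⟩
      funext i
      by_cases hi : i ∈ S
      · exact Subtype.val_injective.extend_apply (fun j : S => x j) (0 : N → ℝ) ⟨i, hi⟩
      · rw [hoff _ i hi, mem_vanishingOff.mp hxS i hi]
  rw [nullity, ← hmap]
  exact (Submodule.equivMapOfInjective e he _).finrank_eq

theorem convex_stdPolytope {M N : Type} [Fintype N] (A : Matrix M N ℝ) (a : M → ℝ) :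
    Convex ℝ (stdPolytope A a) := by
  rintro x ⟨hx, hAx⟩ y ⟨hy, hAy⟩ s t hs ht hst
  refine ⟨fun i => ?_, ?_⟩
  · simpa using add_nonneg (mul_nonneg hs (hx i)) (mul_nonneg ht (hy i))
  · rw [mulVec_add, mulVec_smul, mulVec_smul, hAx, hAy, ← add_smul, hst, one_smul]

theorem eventually_add_smul_mem_stdPolytope {M N : Type} [Fintype N] {A : Matrix M N ℝ}
    {a : M → ℝ} {x z : N → ℝ} (hx : x ∈ stdPolytope A a) (hz : A *ᵥ z = 0)
    (hpos : ∀ i, z i ≠ 0 → 0 < x i) : ∀ᶠ t in 𝓝 (0 : ℝ), x + t • z ∈ stdPolytope A a := by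
  have hcoord : ∀ i, ∀ᶠ t in 𝓝 (0 : ℝ), 0 ≤ x i + t * z i := by
    intro i
    by_cases hzi : z i = 0
    · simp [hzi, hx.1 i]
    · have hcont : Filter.Tendsto (fun t : ℝ => x i + t * z i) (𝓝 0) (𝓝 (x i)) :=
        (by fun_prop : Continuous fun t : ℝ => x i + t * z i).tendsto' 0 (x i) (by simp)
      exact (hcont.eventually_const_lt (hpos i hzi)).mono fun _ => le_of_lt
  filter_upwards [Filter.eventually_all.mpr hcoord] with t ht
  refine ⟨fun i => by simpa using ht i, ?_⟩
  rw [mulVec_add, mulVec_smul, hz, smul_zero, add_zero, hx.2]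

theorem isExposed_stdPolytope_inter_vanishingOff {M N : Type} [Fintype N]
    (A : Matrix M N ℝ) (a : M → ℝ) (S : Set N) :
    IsExposed ℝ (stdPolytope A a) (stdPolytope A a ∩ vanishingOff S) := by
  rintro ⟨x₀, hx₀P, hx₀S⟩
  let l : StrongDual ℝ (N → ℝ) := -∑ i ∈ Sᶜ.toFinset, ContinuousLinearMap.proj i
  have hl : ∀ x, l x = -∑ i ∈ Sᶜ.toFinset, x i := fun x => by simp [l]
  have hl_nonpos : ∀ x ∈ stdPolytope A a, l x ≤ 0 := fun x hx => by
    rw [hl, neg_nonpos]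
    exact Finset.sum_nonneg fun i _ => hx.1 i
  have hl_eq_zero : ∀ x ∈ stdPolytope A a, l x = 0 ↔ x ∈ vanishingOff S := fun x hx => by
    rw [hl, neg_eq_zero, Finset.sum_eq_zero_iff_of_nonneg fun i _ => hx.1 i]
    simp
  refine ⟨l, Set.ext fun x => ⟨fun ⟨hxP, hxS⟩ => ⟨hxP, fun y hy => ?_⟩,
    fun ⟨hxP, hmax⟩ => ⟨hxP, (hl_eq_zero x hxP).mp ?_⟩⟩⟩
  · rw [(hl_eq_zero x hxP).mpr hxS]
    exact hl_nonpos y hy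
  · refine le_antisymm (hl_nonpos x hxP) ?_
    rw [← (hl_eq_zero x₀ hx₀P).mpr hx₀S]
    exact hmax x₀ hx₀P

theorem ker_inf_vanishingOff_le_span_of_edge {M N : Type} [Fintype N] {A : Matrix M N ℝ}
    {a : M → ℝ} {S : Set N} {u w : N → ℝ} {F : Set (N → ℝ)}
    (hF : IsExposed ℝ (stdPolytope A a) F) (hdim : setDim F = 1)
    (hext : F.extremePoints ℝ = {u, w}) (huw : u ≠ w) (hS : ∀ i ∈ S, u i ≠ 0 ∨ w i ≠ 0) :
    LinearMap.ker A.mulVecLin ⊓ vanishingOff S ≤ ℝ ∙ (u - w) := by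
  have huF : u ∈ F := extremePoints_subset (hext ▸ Set.mem_insert u {w})
  have hwF : w ∈ F :=
    extremePoints_subset (hext ▸ Set.mem_insert_of_mem u (Set.mem_singleton w))
  have hspan : vectorSpan ℝ F ≤ ℝ ∙ (u - w) := by
    have huw_mem : u - w ∈ vectorSpan ℝ F := vsub_mem_vectorSpan ℝ huF hwF
    rw [← Submodule.finrank_eq_one_iff_le_span_singleton huw_mem (sub_ne_zero.mpr huw),
      ← direction_affineSpan]
    exact hdim
  set m : N → ℝ := (1 / 2 : ℝ) • u + (1 / 2 : ℝ) • w
  have hmF : m ∈ F :=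
    hF.convex (convex_stdPolytope A a) huF hwF (by norm_num) (by norm_num) (by norm_num)
  have hm_pos : ∀ i ∈ S, 0 < m i := fun i hi => by
    have hui := (hF.subset huF).1 i
    have hwi := (hF.subset hwF).1 i
    simp only [m, Pi.add_apply, Pi.smul_apply, smul_eq_mul]
    rcases hS i hi with h | h
    · linarith [lt_of_le_of_ne hui (Ne.symm h)]
    · linarith [lt_of_le_of_ne hwi (Ne.symm h)]
  rintro z ⟨hz, hzS⟩
  refine hspan (hF.isExtreme.mem_vectorSpan_of_eventually_add_smul_mem hmF
    (eventually_add_smul_mem_stdPolytope (hF.subset hmF) hz fun i hzi => hm_pos i ?_))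
  by_contra hi
  exact hzi (mem_vanishingOff.mp hzS i hi)

theorem stdPolytope_inter_vanishingOff_eq_segment {M N : Type} [Fintype N] {A : Matrix M N ℝ}
    {a : M → ℝ} {S : Set N} {u w : N → ℝ} (hu : u ∈ (stdPolytope A a).extremePoints ℝ)
    (hw : w ∈ (stdPolytope A a).extremePoints ℝ) (huS : u ∈ vanishingOff S)
    (hwS : w ∈ vanishingOff S)
    (hker : LinearMap.ker A.mulVecLin ⊓ vanishingOff S ≤ ℝ ∙ (u - w)) :
    stdPolytope A a ∩ vanishingOff S = segment ℝ u w := by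
  have hconv := (convex_stdPolytope A a).inter (vanishingOff S).convex
  refine Set.Subset.antisymm (fun x ⟨hxP, hxS⟩ => ?_)
    (hconv.segment_subset ⟨hu.1, huS⟩ ⟨hw.1, hwS⟩)
  have hxu : x - u ∈ LinearMap.ker A.mulVecLin ⊓ vanishingOff S :=
    ⟨by simp [mulVec_sub, hxP.2, hu.1.2], sub_mem hxS huS⟩
  refine mem_segment_of_mem_affineSpan_pair hu hw hxP ?_
  rw [← AffineSubspace.vsub_right_mem_direction_iff_mem (left_mem_affineSpan_pair ℝ u w),
    direction_affineSpan, vectorSpan_pair]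
  exact hker hxu

theorem edge_iff_nullity_one_general {M N : Type} [Fintype N]
    (A : Matrix M N ℝ) (a : M → ℝ)
    (u w : N → ℝ) (hu : u ∈ Set.extremePoints ℝ (stdPolytope A a))
    (hw : w ∈ Set.extremePoints ℝ (stdPolytope A a)) (huw : u ≠ w) :
    (∃ F : Set (N → ℝ), IsExposed ℝ (stdPolytope A a) F ∧ setDim F = 1 ∧
        Set.extremePoints ℝ F = {u, w}) ↔
      nullity (colSub A {i : N | u i ≠ 0 ∨ w i ≠ 0}) = 1 := by
  set S : Set N := {i | u i ≠ 0 ∨ w i ≠ 0}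
  have huS : u ∈ vanishingOff S := mem_vanishingOff.mpr fun _ hi => not_not.mp (not_or.mp hi).1
  have hwS : w ∈ vanishingOff S := mem_vanishingOff.mpr fun _ hi => not_not.mp (not_or.mp hi).2
  have hv : u - w ∈ LinearMap.ker A.mulVecLin ⊓ vanishingOff S :=
    ⟨by simp [mulVec_sub, hu.1.2, hw.1.2], sub_mem huS hwS⟩
  rw [nullity_colSub, Submodule.finrank_eq_one_iff_le_span_singleton hv (sub_ne_zero.mpr huw)]
  constructor
  · rintro ⟨F, hF, hdim, hext⟩
    exact ker_inf_vanishingOff_le_span_of_edge hF hdim hext huw fun _ hi => hi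
  · intro hker
    have hexp := stdPolytope_inter_vanishingOff_eq_segment hu hw huS hwS hker ▸
      isExposed_stdPolytope_inter_vanishingOff A a S
    exact ⟨segment ℝ u w, hexp, setDim_segment huw,
      hexp.isExtreme.extremePoints_segment_eq_pair hu hw⟩

theorem edge_iff_nullity_one {M N : Type} [Fintype M] [Fintype N]
    (A : Matrix M N ℝ) (a : M → ℝ)
    (hbdd : Bornology.IsBounded (stdPolytope A a))
    (u w : N → ℝ) (hu : u ∈ Set.extremePoints ℝ (stdPolytope A a))
    (hw : w ∈ Set.extremePoints ℝ (stdPolytope A a)) (huw : u ≠ w) :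
    (∃ F : Set (N → ℝ), IsExposed ℝ (stdPolytope A a) F ∧ setDim F = 1 ∧
        Set.extremePoints ℝ F = {u, w}) ↔
      nullity (colSub A {i : N | u i ≠ 0 ∨ w i ≠ 0}) = 1 :=
  edge_iff_nullity_one_general A a u w hu hw huw
end

section
/- Let G be a finite bipartite graph and b : V → R nonnegative. An element u of the fractional perfect b-matching polytope P(G,b) is a vertex of P(G,b) if and only if the spanning subgraph of G with edge set {e : u_e > 0} is a forest. -/
open Finset
open scoped Classical

variable {V E : Type}

/-- Adjacency in a multigraph given by its endpoint function. -/
def Adj (ends : E → Sym2 V) (u w : V) : Prop := ∃ e, ends e = s(u, w)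

/-- Reachability (walks of any length). -/
def Reach (ends : E → Sym2 V) : V → V → Prop := Relation.ReflTransGen (Adj ends)

/-- The connected component of a vertex, as a vertex set. -/
def component (ends : E → Sym2 V) (v : V) : Set V := {w | Reach ends v w}

/-- Reachability using only edges in `D`. -/
def ReachOn (ends : E → Sym2 V) (D : Set E) (u w : V) : Prop :=
  Relation.ReflTransGen (fun a b => ∃ e ∈ D, ends e = s(a, b)) u w

/-- Component of `v` in the spanning subgraph with edge set `D`. -/
def componentOn (ends : E → Sym2 V) (D : Set E) (v : V) : Set V := {w | ReachOn ends D v w}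

/-- A vertex set is bipartite if it admits a proper 2-colouring of all edges
incident to it (equivalently, no odd cycle inside it). -/
def BipartiteOn (ends : E → Sym2 V) (S : Set V) : Prop :=
  ∃ f : V → Bool, ∀ (e : E) (u w : V), ends e = s(u, w) → u ∈ S → f u ≠ f w

/-- The number of bipartite connected components. -/
noncomputable def numBipComp [Fintype V] (ends : E → Sym2 V) : ℕ :=
  Set.ncard {S : Set V | (∃ v, S = component ends v) ∧ BipartiteOn ends S}

/-- The real incidence matrix: entry `(v, e)` is `1` iff `v` is an endpoint of `e`
(a loop contributes a single `1`). -/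
noncomputable def incMatrix (ends : E → Sym2 V) : Matrix V E ℝ :=
  fun v e => if v ∈ ends e then (1 : ℝ) else 0

/-- Degree of `v` in the edge set `F`, with loops counted twice. -/
noncomputable def degIn (ends : E → Sym2 V) (F : Finset E) (v : V) : ℕ :=
  ∑ e ∈ F, (if ends e = s(v, v) then 2 else if v ∈ ends e then 1 else 0)

/-- An edge set is a cycle iff it is nonempty, every vertex has degree 0 or 2 in it,
and its support is connected via its edges.  This includes loops (length-1 cycles)
and pairs of parallel edges (length-2 cycles). -/
def IsCycle (ends : E → Sym2 V) (F : Finset E) : Prop :=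
  F.Nonempty ∧ (∀ v : V, degIn ends F v = 0 ∨ degIn ends F v = 2) ∧
    ∀ u w : V, (∃ e ∈ F, u ∈ ends e) → (∃ e ∈ F, w ∈ ends e) → ReachOn ends (↑F) u w

/-- The cycles whose edges lie in `D` and whose vertices lie in `S`. -/
def CyclesIn (ends : E → Sym2 V) (D : Set E) (S : Set V) : Set (Finset E) :=
  {F | IsCycle ends F ∧ (∀ e ∈ F, e ∈ D) ∧ ∀ e ∈ F, ∀ v : V, v ∈ ends e → v ∈ S}

/-- The part of the graph with edges in `D` and vertices in `S` is acyclic, or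
contains exactly one cycle with that cycle having odd length. -/
def AcyclicOrOneOdd (ends : E → Sym2 V) (D : Set E) (S : Set V) : Prop :=
  CyclesIn ends D S = ∅ ∨ ∃ F : Finset E, CyclesIn ends D S = {F} ∧ Odd F.card

/-- The fractional perfect `b`-matching polytope of the multigraph. -/
def PGb [Fintype E] (ends : E → Sym2 V) (b : V → ℝ) : Set (E → ℝ) :=
  {x | (∀ e, 0 ≤ x e) ∧ ∀ v : V, ∑ e : E, (if v ∈ ends e then x e else 0) = b v}


/-!
A point `u` of `{x ≥ 0 | A x = b}` is a vertex iff no nonzero `w` with `A w = 0` is supported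
inside the support of `u`. For the incidence matrix of a bipartite graph, every cycle carries such
a `w`: a cycle has as many vertices as edges, and the `±1` colouring makes the rows at its vertices
linearly dependent. Conversely, in the support of a nonzero `w` with `A w = 0` no vertex meets
exactly one edge, so a longest path in it closes up into a cycle.
-/

open Matrix Filter Topology

section Polytope

lemma eq_zero_of_mem_extremePoints_of_add_mem_of_sub_mem {𝕜 M : Type*} [Field 𝕜]
    [LinearOrder 𝕜] [IsStrictOrderedRing 𝕜] [AddCommGroup M] [Module 𝕜 M] {A : Set M}
    {x v : M}
    (hx : x ∈ A.extremePoints 𝕜) (hadd : x + v ∈ A) (hsub : x - v ∈ A) : v = 0 := by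
  have hseg : x ∈ openSegment 𝕜 (x + v) (x - v) :=
    ⟨1 / 2, 1 / 2, by norm_num, by norm_num, by norm_num, by module⟩
  simpa using hx.2 hadd hsub hseg

lemma exists_pos_mul_abs_le {ι : Type*} [Finite ι] {u w : ι → ℝ} (hu : 0 ≤ u)
    (hw : ∀ i, w i ≠ 0 → 0 < u i) : ∃ ε > 0, ∀ i, ε * |w i| ≤ u i := by
  have hev : ∀ᶠ ε in 𝓝 (0 : ℝ), ∀ i, ε * |w i| ≤ u i := by
    refine eventually_all.2 fun i => ?_
    by_cases hwi : w i = 0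
    · exact .of_forall fun ε => by simpa [hwi] using hu i
    · have hlim : Tendsto (fun ε : ℝ => ε * |w i|) (𝓝 0) (𝓝 (0 * |w i|)) :=
        (continuous_id.mul continuous_const).tendsto 0
      rw [zero_mul] at hlim
      exact (hlim.eventually (gt_mem_nhds (hw i hwi))).mono fun _ => le_of_lt
  obtain ⟨ε, hε, hεpos⟩ := ((hev.filter_mono nhdsWithin_le_nhds).and
    (self_mem_nhdsWithin (s := Set.Ioi 0))).exists
  exact ⟨ε, hεpos, hε⟩

variable [Fintype E] {A : Matrix V E ℝ} {b : V → ℝ}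

theorem mem_extremePoints_iff_ker {u : E → ℝ} (hu : 0 ≤ u) (hAu : A *ᵥ u = b) :
    u ∈ {x | 0 ≤ x ∧ A *ᵥ x = b}.extremePoints ℝ ↔
      ∀ w, A *ᵥ w = 0 → (∀ e, w e ≠ 0 → 0 < u e) → w = 0 := by
  constructor
  · intro hext w hw hwu
    obtain ⟨ε, hε, hεw⟩ := exists_pos_mul_abs_le hu hwu
    have hmem : ∀ v, A *ᵥ v = 0 → (∀ e, |v e| ≤ u e) →
        u + v ∈ {x | 0 ≤ x ∧ A *ᵥ x = b} :=
      fun v hv hvu => ⟨fun e => show 0 ≤ u e + v e by linarith [(abs_le.1 (hvu e)).1],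
        by rw [mulVec_add, hv, hAu, add_zero]⟩
    have hbound : ∀ e, |(ε • w) e| ≤ u e := fun e => by
      simpa [abs_mul, abs_of_pos hε] using hεw e
    have hεw_ker : A *ᵥ (ε • w) = 0 := by rw [mulVec_smul, hw, smul_zero]
    have hsub : u - ε • w ∈ {x | 0 ≤ x ∧ A *ᵥ x = b} := by
      rw [sub_eq_add_neg]
      exact hmem _ (by rw [mulVec_neg, hεw_ker, neg_zero]) fun e => by simpa using hbound e
    have := eq_zero_of_mem_extremePoints_of_add_mem_of_sub_mem hext (hmem _ hεw_ker hbound) hsub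
    exact (smul_eq_zero.1 this).resolve_left hε.ne'
  · intro hker
    refine
      ⟨⟨hu, hAu⟩, fun x ⟨hx, hAx⟩ y ⟨hy, hAy⟩ ⟨a, c, ha, hc, hac, hxy⟩ => ?_⟩
    have hcomb : ∀ e, a * x e + c * y e = u e := fun e => by simpa using congrFun hxy e
    have hxy_eq : x = y := by
      refine sub_eq_zero.1 (hker _ (by rw [mulVec_sub, hAx, hAy, sub_self]) fun e he => ?_)
      by_contra hue
      have hxe0 : 0 ≤ x e := hx e
      have hye0 : 0 ≤ y e := hy e
      have hxe : x e = 0 := by nlinarith [hcomb e, not_lt.1 hue]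
      have hye : y e = 0 := by nlinarith [hcomb e, not_lt.1 hue]
      simp [hxe, hye] at he
    rw [← hxy, hxy_eq, ← add_smul, hac, one_smul]

end Polytope

section IncidenceMatrix

variable (ends : E → Sym2 V)

lemma incMatrix_mulVec_apply [Fintype E] (x : E → ℝ) (v : V) :
    (incMatrix ends *ᵥ x) v = ∑ e, if v ∈ ends e then x e else 0 := by
  simp [mulVec, dotProduct, incMatrix, ite_mul]

lemma PGb_eq [Fintype E] (b : V → ℝ) :
    PGb ends b = {x | 0 ≤ x ∧ incMatrix ends *ᵥ x = b} := by
  ext x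
  simp [PGb, Pi.le_def, funext_iff, incMatrix_mulVec_apply]

lemma sum_sign_mul_incMatrix_mulVec [Fintype V] [Fintype E] {f : V → Bool}
    (hf : ∀ e a c, ends e = s(a, c) → f a ≠ f c) (x : E → ℝ) :
    ∑ v, (if f v then 1 else -1) * (incMatrix ends *ᵥ x) v = 0 := by
  simp only [incMatrix_mulVec_apply, mul_sum]
  rw [sum_comm]
  refine sum_eq_zero fun e _ => ?_
  induction h : ends e using Sym2.ind with
  | h a c =>
    have hfac := hf e a c h
    have hac : a ≠ c := fun h' => hfac (h' ▸ rfl)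
    simp only [Sym2.mem_iff, mul_ite, mul_zero]
    rw [sum_ite, sum_const_zero, add_zero, ← sum_mul]
    have : ({v | v = a ∨ v = c} : Finset V) = {a, c} := by ext; simp
    rw [this, sum_pair hac]
    cases ha : f a <;> cases hc : f c <;> simp_all

lemma sum_degIn [Fintype V] (F : Finset E) : ∑ v, degIn ends F v = 2 * #F := by
  unfold degIn
  rw [sum_comm, mul_comm, ← smul_eq_mul, ← sum_const]
  refine sum_congr rfl fun e _ => ?_
  induction ends e using Sym2.ind with
  | h a c =>
    by_cases hac : a = c
    · subst hac
      rw [sum_eq_single a (fun v _ hva => by simp [hva, Ne.symm hva]) (by simp)]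
      simp
    · have hloop : ∀ v, s(a, c) ≠ s(v, v) := fun v h => by
        rcases Sym2.eq_iff.1 h with ⟨rfl, rfl⟩ | ⟨rfl, rfl⟩ <;> exact hac rfl
      simp only [hloop, if_false, Sym2.mem_iff]
      rw [sum_boole]
      have : ({v | v = a ∨ v = c} : Finset V) = {a, c} := by ext; simp
      simp [this, card_pair hac]

lemma degIn_eq_zero_iff (F : Finset E) (v : V) :
    degIn ends F v = 0 ↔ ∀ e ∈ F, v ∉ ends e := by
  refine sum_eq_zero_iff.trans (forall₂_congr fun e _ => ?_)
  split_ifs with hloop hv <;> simp_all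

end IncidenceMatrix

section CycleToKernel

variable {ends : E → Sym2 V}

lemma IsCycle.card_support [Fintype V] {F : Finset E} (hF : IsCycle ends F) :
    #({v | degIn ends F v ≠ 0} : Finset V) = #F := by
  have h := sum_degIn ends F
  rw [← sum_filter_ne_zero,
    sum_congr rfl fun v hv => (hF.2.1 v).resolve_left (mem_filter.1 hv).2, sum_const,
    smul_eq_mul] at h
  simp only [ne_eq] at h ⊢
  omega

theorem IsCycle.exists_incMatrix_mulVec_eq_zero [Fintype V] [Fintype E] {f : V → Bool}
    (hf : ∀ e a c, ends e = s(a, c) → f a ≠ f c) {F : Finset E} (hF : IsCycle ends F) :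
    ∃ w : E → ℝ, w ≠ 0 ∧ (∀ e ∉ F, w e = 0) ∧ incMatrix ends *ᵥ w = 0 := by
  set S : Finset V := {v | degIn ends F v ≠ 0}
  obtain ⟨v₀, hv₀⟩ : S.Nonempty := by
    rw [← card_pos, hF.card_support]
    exact hF.1.card_pos
  -- `#F` unknowns against `#S - 1 = #F - 1` equations
  let Φ : (E → ℝ) →ₗ[ℝ] (S.erase v₀ → ℝ) × ((Fᶜ : Finset E) → ℝ) :=
    (LinearMap.funLeft ℝ ℝ Subtype.val ∘ₗ (incMatrix ends).mulVecLin).prod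
      (LinearMap.funLeft ℝ ℝ Subtype.val)
  have hdim : Module.finrank ℝ ((S.erase v₀ → ℝ) × ((Fᶜ : Finset E) → ℝ)) <
      Module.finrank ℝ (E → ℝ) := by
    have := card_le_univ F
    simp only [Module.finrank_prod, Module.finrank_fintype_fun_eq_card, Fintype.card_coe,
      card_erase_of_mem hv₀, card_compl, show #S = #F from hF.card_support]
    have := hF.1.card_pos
    omega
  obtain ⟨w, hw, hw0⟩ :=
    Submodule.exists_mem_ne_zero_of_ne_bot (Φ.ker_ne_bot_of_finrank_lt hdim)
  have hwF : ∀ e ∉ F, w e = 0 := fun e he =>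
    congrFun (congrArg Prod.snd (LinearMap.mem_ker.1 hw)) ⟨e, mem_compl.2 he⟩
  have hrow : ∀ v ≠ v₀, (incMatrix ends *ᵥ w) v = 0 := by
    intro v hv
    by_cases hvS : v ∈ S
    · exact congrFun (congrArg Prod.fst (LinearMap.mem_ker.1 hw))
        ⟨v, mem_erase.2 ⟨hv, hvS⟩⟩
    · have hv0 := (degIn_eq_zero_iff ends F v).1 (by simpa [S] using hvS)
      rw [incMatrix_mulVec_apply]
      refine sum_eq_zero fun e _ => ?_
      by_cases he : e ∈ F
      · exact if_neg (hv0 e he)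
      · simp [hwF e he]
  -- the `±1` colouring makes the rows dependent, so the row of `v₀` follows from the others
  have hrow₀ : (incMatrix ends *ᵥ w) v₀ = 0 := by
    have h := sum_sign_mul_incMatrix_mulVec ends hf w
    rw [sum_eq_single v₀ (fun v _ hv => by rw [hrow v hv, mul_zero]) (by simp)] at h
    exact (mul_eq_zero.1 h).resolve_left (by split_ifs <;> norm_num)
  refine ⟨w, hw0, hwF, funext fun v => ?_⟩
  by_cases hv : v = v₀
  · rw [hv, hrow₀, Pi.zero_apply]
  · rw [hrow v hv, Pi.zero_apply]

end CycleToKernel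

section Paths

variable {ends : E → Sym2 V}

lemma ReachOn.symm {D : Set E} {u w : V} (h : ReachOn ends D u w) : ReachOn ends D w u := by
  induction h with
  | refl => exact .refl
  | tail _ hab ih =>
    obtain ⟨e, he, h⟩ := hab
    exact ih.head ⟨e, he, h.trans Sym2.eq_swap⟩

lemma Fin.add_one_ne_self {L : ℕ} [NeZero L] (hL : 2 ≤ L) (i : Fin L) : i + 1 ≠ i := by
  rw [Ne, add_eq_left, Fin.ext_iff, Fin.val_one', Fin.val_zero, Nat.mod_eq_of_lt (by omega)]
  exact one_ne_zero

open Fin.NatCast in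
theorem isCycle_image_of_cyclic {L : ℕ} [NeZero L] (hL : 2 ≤ L) {c : Fin L → V}
    (hc : Function.Injective c) {g : Fin L → E} (hg : Function.Injective g)
    (hcg : ∀ i, ends (g i) = s(c i, c (i + 1))) : IsCycle ends (univ.image g) := by
  have hsucc : ∀ i : Fin L, i + 1 ≠ i := Fin.add_one_ne_self hL
  refine ⟨univ_nonempty.image g, fun x => ?_, ?_⟩
  · have hloop : ∀ i y, ends (g i) ≠ s(y, y) := fun i y h => by
      rw [hcg, Sym2.eq_iff] at h
      exact hsucc i (hc (by rcases h with ⟨h₁, h₂⟩ | ⟨h₁, h₂⟩ <;> rw [h₁, h₂]))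
    rw [degIn, sum_image fun i _ j _ h => hg h]
    simp only [hloop, if_false]
    simp only [hcg, Sym2.mem_iff]
    by_cases hx : ∃ k, c k = x
    · obtain ⟨k, rfl⟩ := hx
      have hedges : ({i | c k = c i ∨ c k = c (i + 1)} : Finset (Fin L)) = {k, k - 1} := by
        ext i
        simp [hc.eq_iff, eq_comm (a := k), eq_sub_iff_add_eq]
      right
      rw [sum_boole, hedges, card_pair fun h => hsucc (k - 1) (by rw [sub_add_cancel, ← h])]
      rfl
    · left
      simp only [not_exists] at hx
      exact sum_eq_zero fun i _ => by simp [Ne.symm (hx i), Ne.symm (hx (i + 1))]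
  · have hreach : ∀ n : ℕ, ReachOn ends ↑(univ.image g) (c 0) (c n) := by
      intro n
      induction n with
      | zero => exact .refl
      | succ n ih =>
        exact ih.tail ⟨g n, by simp, by rw [hcg, Nat.cast_succ]⟩
    have hmem : ∀ x, (∃ e ∈ univ.image g, x ∈ ends e) →
        ReachOn ends ↑(univ.image g) (c 0) x := by
      rintro x ⟨_, he, hx⟩
      obtain ⟨i, -, rfl⟩ := mem_image.1 he
      rw [hcg, Sym2.mem_iff] at hx
      rcases hx with rfl | rfl
      · simpa using hreach i
      · simpa using hreach (i + 1 : Fin L)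
    exact fun x y hx hy => (hmem x hx).symm.trans (hmem y hy)

variable {D : Set E} {n : ℕ} {v : ℕ → V} {e : ℕ → E}

-- Indexed by `ℕ` (only `v 0, …, v n` and `e 0, …, e (n - 1)` matter) so that suffixes
-- are shifts.
variable (ends) in
def IsPathOn (D : Set E) (n : ℕ) (v : ℕ → V) (e : ℕ → E) : Prop :=
  Set.InjOn v (Set.Iic n) ∧ ∀ i < n, e i ∈ D ∧ ends (e i) = s(v i, v (i + 1))

lemma IsPathOn.injOn_edges (hp : IsPathOn ends D n v e) : Set.InjOn e (Set.Iio n) := by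
  intro i hi j hj h
  simp only [Set.mem_Iio] at hi hj
  have hv : ∀ {k l}, k ≤ n → l ≤ n → v k = v l → k = l := fun hk hl h => hp.1 hk hl h
  have hends := (hp.2 i hi).2.symm.trans (h ▸ (hp.2 j hj).2)
  rcases Sym2.eq_iff.1 hends with ⟨h₁, -⟩ | ⟨h₁, h₂⟩
  · exact hv hi.le hj.le h₁
  · have := hv hi.le hj h₁
    have := hv hi hj.le h₂
    omega

lemma IsPathOn.drop (hp : IsPathOn ends D n v e) {j : ℕ} (hj : j ≤ n) :
    IsPathOn ends D (n - j) (fun k => v (j + k)) (fun k => e (j + k)) := by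
  refine ⟨fun k hk l hl h => ?_, fun i hi => ?_⟩
  · simp only [Set.mem_Iic] at hk hl
    have := hp.1 (show j + k ∈ Set.Iic n by simp; omega)
      (show j + l ∈ Set.Iic n by simp; omega) h
    omega
  · simpa only [add_assoc] using hp.2 (j + i) (by omega)

lemma IsPathOn.snoc (hp : IsPathOn ends D n v e) {f : E} {y : V} (hfD : f ∈ D)
    (hf : ends f = s(v n, y)) (hy : y ∉ v '' Set.Iic n) :
    IsPathOn ends D (n + 1) (Function.update v (n + 1) y) (Function.update e n f) := by
  have hEq : Set.EqOn v (Function.update v (n + 1) y) (Set.Iic n) := fun k hk =>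
    (Function.update_of_ne (by simp at hk; omega) _ _).symm
  refine ⟨?_, fun i hi => ?_⟩
  · rw [← Order.succ_eq_add_one, Order.Iic_succ, Order.succ_eq_add_one,
      Set.injOn_insert (by simp)]
    refine ⟨hp.1.congr hEq, ?_⟩
    rwa [Function.update_self, ← hEq.image_eq]
  · rcases (Nat.lt_succ_iff.1 hi).lt_or_eq with hi | rfl
    · rw [Function.update_of_ne hi.ne, Function.update_of_ne (by omega),
        Function.update_of_ne (by omega)]
      exact hp.2 i hi
    · rw [Function.update_self, Function.update_self, Function.update_of_ne (by omega)]
      exact ⟨hfD, hf⟩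

theorem IsPathOn.exists_isCycle_of_closing (hp : IsPathOn ends D n v e) (hn : 0 < n) {f : E}
    (hfD : f ∈ D) (hf : ends f = s(v n, v 0)) (hfe : ∀ i < n, f ≠ e i) :
    ∃ F : Finset E, ↑F ⊆ D ∧ IsCycle ends F := by
  let g : Fin (n + 1) → E := fun k => if k.val < n then e k else f
  have hgD : ∀ k, g k ∈ D := fun k => by
    by_cases hk : k.val < n
    · simpa [g, hk] using (hp.2 k hk).1
    · simpa [g, hk] using hfD
  have hg : Function.Injective g := by
    intro k l h
    by_cases hk : k.val < n <;> by_cases hl : l.val < n <;>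
      simp only [g, hk, hl, if_true, if_false] at h
    · exact Fin.ext (hp.injOn_edges hk hl h)
    · exact absurd h.symm (hfe k hk)
    · exact absurd h (hfe l hl)
    · exact Fin.ext (by omega)
  have hcg : ∀ k : Fin (n + 1), ends (g k) = s(v k, v ↑(k + 1)) := by
    intro k
    by_cases hk : k.val < n
    · rw [Fin.val_add_one_of_lt (Fin.lt_last_iff_ne_last.2 fun h => by simp [h] at hk)]
      simpa [g, hk] using (hp.2 k hk).2
    · rw [Fin.eq_last_of_not_lt hk, Fin.last_add_one]
      simpa [g] using hf
  refine ⟨univ.image g, by simpa [Set.subset_def] using hgD,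
    isCycle_image_of_cyclic (by omega) (c := fun k : Fin (n + 1) => v k) ?_ hg hcg⟩
  exact fun k l h => Fin.ext (hp.1 (Nat.lt_succ_iff.1 k.isLt) (Nat.lt_succ_iff.1 l.isLt) h)

variable (ends) in
def NoPendantEdge (D : Set E) : Prop :=
  ∀ x, ∀ e ∈ D, x ∈ ends e → ∃ e' ∈ D, e' ≠ e ∧ x ∈ ends e'

theorem IsPathOn.extend_or_exists_isCycle (hloop : ∀ e a, ends e ≠ s(a, a))
    (hdeg : NoPendantEdge ends D)
    (hp : IsPathOn ends D n v e) (hn : 0 < n) :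
    (∃ v' e', IsPathOn ends D (n + 1) v' e') ∨
      ∃ F : Finset E, ↑F ⊆ D ∧ IsCycle ends F := by
  obtain ⟨he, hends⟩ := hp.2 (n - 1) (by omega)
  rw [Nat.sub_add_cancel hn] at hends
  obtain ⟨f, hfD, hfne, hvf⟩ :=
    hdeg (v n) (e (n - 1)) he (by rw [hends]; exact Sym2.mem_mk_right _ _)
  obtain ⟨y, hy⟩ := Sym2.mem_iff_exists.1 hvf
  by_cases hyv : y ∈ v '' Set.Iic n
  · right
    obtain ⟨j, hj, rfl⟩ := hyv
    have hjn : j < n := (Set.mem_Iic.1 hj).lt_of_ne fun h => hloop f (v n) (h ▸ hy)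
    have hfe : ∀ i < n, f ≠ e i := by
      intro i hi hfi
      have hvi : v n ∈ ends (e i) := hfi ▸ hvf
      rw [(hp.2 i hi).2, Sym2.mem_iff] at hvi
      rcases hvi with h | h
      · have := hp.1 (Set.mem_Iic.2 le_rfl) (Set.mem_Iic.2 hi.le) h
        omega
      · have := hp.1 (Set.mem_Iic.2 le_rfl) (Set.mem_Iic.2 hi) h
        exact hfne (by rw [hfi]; congr 1; omega)
    refine (hp.drop (Set.mem_Iic.1 hj)).exists_isCycle_of_closing (by omega) hfD ?_
      fun i hi => hfe _ (by omega)
    simpa [Nat.add_sub_cancel' (Set.mem_Iic.1 hj)] using hy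
  · exact .inl ⟨_, _, hp.snoc hfD hy hyv⟩

theorem exists_isCycle_of_noPendantEdge [Fintype V] (hloop : ∀ e a, ends e ≠ s(a, a))
    (hD : D.Nonempty) (hdeg : NoPendantEdge ends D) :
    ∃ F : Finset E, ↑F ⊆ D ∧ IsCycle ends F := by
  -- otherwise every path extends, until it has more vertices than the graph
  by_contra hno
  have hpath : ∀ n, ∃ v e, IsPathOn ends D (n + 1) v e := by
    intro n
    induction n with
    | zero =>
      obtain ⟨e₀, he₀⟩ := hD
      induction h : ends e₀ using Sym2.ind with
      | h a c =>
        have hac : a ≠ c := fun hac => hloop e₀ a (hac ▸ h)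
        refine ⟨fun i => if i = 0 then a else c, fun _ => e₀, fun k hk l hl hkl => ?_,
          fun i hi => ⟨he₀, by simp [show i = 0 by omega, h]⟩⟩
        simp only [Set.mem_Iic, zero_add] at hk hl
        interval_cases k <;> interval_cases l <;> simp_all [Ne.symm hac]
    | succ n ih =>
      obtain ⟨v, e, hp⟩ := ih
      exact (hp.extend_or_exists_isCycle hloop hdeg n.succ_pos).resolve_right hno
  obtain ⟨v, e, hp⟩ := hpath (Fintype.card V)
  have := card_le_card_of_injOn v (s := Iic (Fintype.card V + 1)) (t := univ) (by simp)
    (by simpa using hp.1)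
  simp at this

end Paths

section KernelToCycle

variable {ends : E → Sym2 V}

lemma noPendantEdge_of_incMatrix_mulVec_eq_zero [Fintype E] {w : E → ℝ}
    (hker : incMatrix ends *ᵥ w = 0) : NoPendantEdge ends {e | w e ≠ 0} := by
  intro x e he hx
  by_contra! h
  have hrow := congrFun hker x
  rw [incMatrix_mulVec_apply, sum_eq_single e (fun e' _ hne => ?_) (by simp), if_pos hx] at hrow
  · exact he hrow
  · by_cases hx' : x ∈ ends e'
    · rw [if_pos hx']
      by_contra hw
      exact h e' hw hne hx'
    · exact if_neg hx'

theorem exists_isCycle_of_incMatrix_mulVec_eq_zero [Fintype V] [Fintype E]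
    (hloop : ∀ e a, ends e ≠ s(a, a)) {w : E → ℝ} (hw : w ≠ 0)
    (hker : incMatrix ends *ᵥ w = 0) :
    ∃ F : Finset E, (∀ e ∈ F, w e ≠ 0) ∧ IsCycle ends F := by
  obtain ⟨e₀, he₀⟩ := Function.ne_iff.1 hw
  obtain ⟨F, hFw, hF⟩ := exists_isCycle_of_noPendantEdge hloop ⟨e₀, he₀⟩
    (noPendantEdge_of_incMatrix_mulVec_eq_zero hker)
  exact ⟨F, fun e he => hFw he, hF⟩

end KernelToCycle

theorem vertex_PGb_iff_forest_general [Fintype V] [Fintype E] (ends : E → Sym2 V) (b : V → ℝ)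
    (hbip : ∃ f : V → Bool, ∀ (e : E) (u w : V), ends e = s(u, w) → f u ≠ f w)
    (u : E → ℝ) (hu : u ∈ PGb ends b) :
    u ∈ Set.extremePoints ℝ (PGb ends b) ↔
      ∀ F : Finset E, (∀ e ∈ F, 0 < u e) → ¬ IsCycle ends F := by
  obtain ⟨f, hf⟩ := hbip
  rw [PGb_eq] at hu ⊢
  rw [mem_extremePoints_iff_ker hu.1 hu.2]
  constructor
  · intro hker F hFu hF
    obtain ⟨w, hw, hwF, hwker⟩ := hF.exists_incMatrix_mulVec_eq_zero hf
    exact hw (hker w hwker fun e he => hFu e (by_contra fun heF => he (hwF e heF)))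
  · intro hforest w hwker hwu
    by_contra hw
    obtain ⟨F, hFw, hF⟩ :=
      exists_isCycle_of_incMatrix_mulVec_eq_zero (fun e a h => hf e a a h rfl) hw hwker
    exact hforest F (fun e he => hwu e (hFw e he)) hF

theorem vertex_PGb_iff_forest [Fintype V] [Fintype E] (ends : E → Sym2 V) (b : V → ℝ)
    (hbip : ∃ f : V → Bool, ∀ (e : E) (u w : V), ends e = s(u, w) → f u ≠ f w)
    (hb : ∀ v, 0 ≤ b v) (u : E → ℝ) (hu : u ∈ PGb ends b) :
    u ∈ Set.extremePoints ℝ (PGb ends b) ↔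
      ∀ F : Finset E, (∀ e ∈ F, 0 < u e) → ¬ IsCycle ends F :=
  vertex_PGb_iff_forest_general ends b hbip u hu
end

section
/- If u is a vertex of P(G,b), then |{e ∈ E : u_e > 0}| ≤ |V| − B, where B is the number of bipartite connected components of G. -/
open Finset
open scoped Classical

variable {V E : Type}

/-! At a vertex `u` of `P(G,b)` the columns of the incidence matrix `A` indexed by the support
of `u` are linearly independent, since a kernel vector `y` supported there would make `u ± ε y`
points of `P(G,b)` for small `ε > 0`. Hence the support has at most `rank A` edges.
On the other hand, a proper 2-colouring of a bipartite component gives a `±1` vector supported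
on it that is orthogonal to every column, because each edge has one endpoint of each colour.
These vectors have disjoint supports, so `rank A ≤ |V| - B`. -/

open Matrix

theorem exists_pos_forall_mul_abs_le {ι : Type*} [Finite ι] {u y : ι → ℝ} (hu : 0 ≤ u)
    (hy : ∀ i, u i = 0 → y i = 0) : ∃ ε > 0, ∀ i, ε * |y i| ≤ u i := by
  have h : ∀ i, ∀ᶠ ε in nhds (0 : ℝ), ε * |y i| ≤ u i := by
    intro i
    rcases (hu i).eq_or_lt with hu0 | hpos
    · simp [hy i hu0.symm, ← hu0]
    · have : Filter.Tendsto (fun ε : ℝ => ε * |y i|) (nhds 0) (nhds 0) := by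
        simpa using (continuous_mul_const |y i|).tendsto 0
      exact this.eventually (eventually_le_nhds hpos)
  have hpos : ∀ᶠ ε in nhdsWithin (0 : ℝ) (Set.Ioi 0), 0 < ε ∧ ∀ i, ε * |y i| ≤ u i :=
    Filter.Eventually.and self_mem_nhdsWithin
      ((Filter.eventually_all.2 h).filter_mono nhdsWithin_le_nhds)
  exact hpos.exists

theorem eq_zero_of_mem_extremePoints_of_add_smul_mem {𝕜 F : Type*} [Field 𝕜] [LinearOrder 𝕜]
    [IsStrictOrderedRing 𝕜] [AddCommGroup F] [Module 𝕜 F] {A : Set F} {x y : F} {ε : 𝕜}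
    (hx : x ∈ A.extremePoints 𝕜) (hε : ε ≠ 0) (hadd : x + ε • y ∈ A) (hsub : x - ε • y ∈ A) :
    y = 0 := by
  have hmid : x ∈ openSegment 𝕜 (x - ε • y) (x + ε • y) :=
    ⟨1 / 2, 1 / 2, by norm_num, by norm_num, by norm_num, by module⟩
  simpa [hε] using hx.2 hsub hadd hmid

namespace Matrix

variable {m n : Type*} [Fintype n]

theorem eq_zero_of_mem_extremePoints_of_mulVec_eq_zero {A : Matrix m n ℝ} {b : m → ℝ}
    {u y : n → ℝ} (hu : u ∈ {x | 0 ≤ x ∧ A *ᵥ x = b}.extremePoints ℝ) (hAy : A *ᵥ y = 0)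
    (hy : ∀ i, u i = 0 → y i = 0) : y = 0 := by
  obtain ⟨hu0, hub⟩ := hu.1
  obtain ⟨ε, hε, hεu⟩ := exists_pos_forall_mul_abs_le hu0 hy
  have hbound (i : n) : |ε * y i| ≤ u i := by rw [abs_mul, abs_of_pos hε]; exact hεu i
  refine eq_zero_of_mem_extremePoints_of_add_smul_mem hu hε.ne'
    ⟨fun i => ?_, ?_⟩ ⟨fun i => ?_, ?_⟩
  all_goals simp [mulVec_add, mulVec_sub, mulVec_smul, hAy, hub]
  all_goals linarith [abs_le.1 (hbound i)]

theorem card_pos_le_rank_of_mem_extremePoints {A : Matrix m n ℝ} {b : m → ℝ} {u : n → ℝ}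
    (hu : u ∈ {x | 0 ≤ x ∧ A *ᵥ x = b}.extremePoints ℝ) :
    Fintype.card {i // 0 < u i} ≤ A.rank := by
  set A' := A.submatrix id ((↑) : {i // 0 < u i} → n)
  have hinj : Function.Injective A'.mulVecLin := by
    refine (injective_iff_map_eq_zero _).2 fun c hc => ?_
    set y : n → ℝ := fun i => if h : 0 < u i then c ⟨i, h⟩ else 0
    have hAy : A *ᵥ y = A' *ᵥ c := by
      ext v
      have hout : ∑ i : {i // ¬0 < u i}, A v i * y i = 0 :=
        Finset.sum_eq_zero fun i _ => by simp [y, i.2]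
      rw [mulVec, dotProduct, ← Fintype.sum_subtype_add_sum_subtype (fun i => 0 < u i), hout,
        add_zero]
      exact Finset.sum_congr rfl fun i _ => by simp [y, A', i.2]
    have hy0 : y = 0 := eq_zero_of_mem_extremePoints_of_mulVec_eq_zero hu
      (by rwa [hAy, ← mulVecLin_apply]) fun i hi => by simp [y, hi]
    ext ⟨i, hi⟩
    simpa [y, hi] using congrFun hy0 i
  calc Fintype.card {i // 0 < u i} = A'.rank := by
        rw [rank, LinearMap.finrank_range_of_inj hinj, Module.finrank_fintype_fun_eq_card]
    _ ≤ A.rank := rank_submatrix_le A id _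

theorem rank_add_nullity {α β : Type} [Fintype β] (A : Matrix α β ℝ) :
    A.rank + nullity A = Fintype.card β := by
  rw [rank, nullity, LinearMap.finrank_range_add_finrank_ker, Module.finrank_fintype_fun_eq_card]

end Matrix

theorem PGb_eq_setOf_mulVec [Fintype E] (ends : E → Sym2 V) (b : V → ℝ) :
    PGb ends b = {x | 0 ≤ x ∧ incMatrix ends *ᵥ x = b} := by
  ext x
  simp [PGb, incMatrix, Pi.le_def, funext_iff, mulVec, dotProduct]

section Components

variable {ends : E → Sym2 V}

theorem Adj.symm {a b : V} (h : Adj ends a b) : Adj ends b a :=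
  h.imp fun _ he => he.trans Sym2.eq_swap

theorem Reach.symm {a b : V} (h : Reach ends a b) : Reach ends b a := by
  induction h with
  | refl => exact .refl
  | tail _ hbc ih => exact .head hbc.symm ih

theorem mem_component_self (v : V) : v ∈ component ends v := .refl

theorem mem_component_of_ends_eq {v a b : V} {e : E} (he : ends e = s(a, b))
    (ha : a ∈ component ends v) : b ∈ component ends v :=
  ha.tail ⟨e, he⟩

theorem component_eq_of_mem {v w : V} (h : w ∈ component ends v) :
    component ends w = component ends v :=
  Set.ext fun _ => ⟨h.trans, h.symm.trans⟩

end Components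

theorem vecMul_incMatrix_eq_zero [Fintype V] {ends : E → Sym2 V} {w : V → ℝ}
    (hw : ∀ e a b, ends e = s(a, b) → w a + w b = 0) : w ᵥ* incMatrix ends = 0 := by
  -- for a loop at `a`, whose column has a single `1`, the hypothesis reads `2 * w a = 0`
  funext e
  obtain ⟨⟨a, b⟩, hab⟩ := Sym2.mk_surjective (ends e)
  have hab : ends e = s(a, b) := hab.symm
  have hsum : (w ᵥ* incMatrix ends) e = ∑ v ∈ {a, b}, w v := by
    simp only [vecMul, dotProduct, incMatrix, hab, mul_ite, mul_one, mul_zero,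
      ← Finset.sum_filter]
    congr 1
    ext
    simp
  rw [hsum, Pi.zero_apply]
  rcases eq_or_ne a b with rfl | hne
  · simpa using hw e a a hab
  · simpa [Finset.sum_pair hne] using hw e a b hab

noncomputable def signedIndicator (S : Set V) (f : V → Bool) : V → ℝ :=
  S.indicator fun v => if f v then 1 else -1

theorem signedIndicator_ne_zero {S : Set V} (f : V → Bool) {v : V} (hv : v ∈ S) :
    signedIndicator S f v ≠ 0 := by
  cases h : f v <;> simp [signedIndicator, hv, h]

theorem signedIndicator_add_eq_zero {ends : E → Sym2 V} {S : Set V} {f : V → Bool}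
    (hS : ∀ e a b, ends e = s(a, b) → a ∈ S → b ∈ S)
    (hf : ∀ e a b, ends e = s(a, b) → a ∈ S → f a ≠ f b) {e : E} {a b : V}
    (he : ends e = s(a, b)) : signedIndicator S f a + signedIndicator S f b = 0 := by
  by_cases ha : a ∈ S
  · have hb := hS e a b he ha
    have hab := hf e a b he ha
    cases h : f a <;> cases h' : f b <;> simp_all [signedIndicator]
  · have hb : b ∉ S := fun hb => ha (hS e b a (he.trans Sym2.eq_swap) hb)
    simp [signedIndicator, ha, hb]

theorem numBipComp_le_nullity_transpose [Fintype V] (ends : E → Sym2 V) :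
    numBipComp ends ≤ nullity (incMatrix ends)ᵀ := by
  set C := {S : Set V | (∃ v, S = component ends v) ∧ BipartiteOn ends S}
  have : Fintype C := Fintype.ofFinite C
  choose rep hrep using fun S : C => S.2.1
  choose f hf using fun S : C => S.2.2
  set w : C → V → ℝ := fun S => signedIndicator S (f S)
  have hrep_mem (S : C) : rep S ∈ (S : Set V) := hrep S ▸ mem_component_self _
  have hdisj {S T : C} (hST : S ≠ T) (v : V) : v ∉ (S : Set V) ∨ v ∉ (T : Set V) := by
    by_contra! ⟨hvS, hvT⟩
    rw [hrep S] at hvS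
    rw [hrep T] at hvT
    exact hST (Subtype.ext (by
      rw [hrep S, hrep T, ← component_eq_of_mem hvS, ← component_eq_of_mem hvT]))
  have hli : LinearIndependent ℝ w := by
    refine RCLike.linearIndependent_of_ne_zero_of_wInner_one_eq_zero
      (fun S hS => signedIndicator_ne_zero (f S) (hrep_mem S) (congrFun hS (rep S))) ?_
    intro S T hST
    refine Finset.sum_eq_zero fun v _ => ?_
    rcases hdisj hST v with hv | hv <;> simp [w, signedIndicator, hv]
  have hker (S : C) : w S ∈ LinearMap.ker (incMatrix ends)ᵀ.mulVecLin := by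
    rw [LinearMap.mem_ker, mulVecLin_apply, mulVec_transpose]
    refine vecMul_incMatrix_eq_zero fun e a b he => signedIndicator_add_eq_zero ?_ (hf S) he
    intro e a b he ha
    rw [hrep S] at ha ⊢
    exact mem_component_of_ends_eq he ha
  calc numBipComp ends = Fintype.card C := by
        rw [numBipComp, ← Nat.card_coe_set_eq, Nat.card_eq_fintype_card]
    _ ≤ nullity (incMatrix ends)ᵀ :=
        (LinearIndependent.of_comp (LinearMap.ker _).subtype
          (v := fun S => (⟨w S, hker S⟩ : LinearMap.ker _)) hli).fintype_card_le_finrank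

theorem vertex_PGb_support_card_general [Fintype V] [Fintype E] (ends : E → Sym2 V) (b : V → ℝ)
    (u : E → ℝ)
    (hu : u ∈ Set.extremePoints ℝ (PGb ends b)) :
    (Set.ncard {e : E | 0 < u e} : ℤ)
      ≤ (Fintype.card V : ℤ) - (numBipComp ends : ℤ) := by
  rw [PGb_eq_setOf_mulVec] at hu
  have hsupport : Set.ncard {e | 0 < u e} ≤ (incMatrix ends).rank := by
    rw [← Nat.card_coe_set_eq, Nat.card_eq_fintype_card]
    exact card_pos_le_rank_of_mem_extremePoints hu
  have hrank := (incMatrix ends)ᵀ.rank_add_nullity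
  rw [rank_transpose] at hrank
  have hbip := numBipComp_le_nullity_transpose ends
  omega

theorem vertex_PGb_support_card [Fintype V] [Fintype E] (ends : E → Sym2 V) (b : V → ℝ)
    (hb : ∀ v, 0 ≤ b v) (u : E → ℝ)
    (hu : u ∈ Set.extremePoints ℝ (PGb ends b)) :
    (Set.ncard {e : E | 0 < u e} : ℤ)
      ≤ (Fintype.card V : ℤ) - (numBipComp ends : ℤ) :=
  vertex_PGb_support_card_general ends b u hu
end

section
/- If the fractional perfect b-matching polytope P(G,b) contains a strictly positive element (x_e > 0 for all edges e), then its dimension equals |E| − |V| + B, where B is the number of bipartite connected components of G. -/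
open Finset
open scoped Classical

variable {V E : Type}

/-
Since `P(G,b)` contains a point with all coordinates positive, it is a neighbourhood of that
point inside the affine space `{x | M x = b}`, `M` the incidence matrix; so its dimension is the
nullity of `M`, that is `|E| - |V| + dim ker Mᵀ`. A vector `z ∈ ker Mᵀ` satisfies
`z u + z w = 0` along every edge, so on a connected component it is either identically zero or
nowhere zero with alternating signs, the latter forcing the component to be bipartite. Hence
`z` is determined by its values at one base vertex of each bipartite component, and these values
are arbitrary: `dim ker Mᵀ = B`.
-/

open Matrix Topology

section Polyhedron

variable {m n : Type} [Fintype n]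

theorem vectorSpan_nonneg_mulVec_eq_ker (A : Matrix m n ℝ) {b : m → ℝ} {x : n → ℝ}
    (hx : ∀ i, 0 < x i) (hAx : A *ᵥ x = b) :
    vectorSpan ℝ {y | 0 ≤ y ∧ A *ᵥ y = b} = LinearMap.ker A.mulVecLin := by
  apply le_antisymm
  · rw [vectorSpan_def, Submodule.span_le]
    rintro _ ⟨y₁, ⟨-, hy₁⟩, y₂, ⟨-, hy₂⟩, rfl⟩
    simp [Matrix.mulVec_sub, hy₁, hy₂]
  · intro y hy
    have hnear : ∀ᶠ t in 𝓝 (0 : ℝ), ∀ i, 0 < x i + t * y i :=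
      Filter.eventually_all.2 fun i =>
        ((continuous_const.add (continuous_id.mul continuous_const)).tendsto' 0 (x i)
          (by simp)).eventually_const_lt (hx i)
    obtain ⟨t, hpos, ht⟩ := ((eventually_nhdsWithin_of_eventually_nhds hnear).and
      (self_mem_nhdsWithin : {t : ℝ | t ≠ 0} ∈ 𝓝[≠] 0)).exists
    have hmem : x + t • y ∈ {y | 0 ≤ y ∧ A *ᵥ y = b} := by
      refine ⟨fun i => (hpos i).le, ?_⟩
      rw [Matrix.mulVec_add, Matrix.mulVec_smul, show A *ᵥ y = 0 from hy, smul_zero, add_zero,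
        hAx]
    have hsub := vsub_mem_vectorSpan ℝ hmem ⟨fun i => (hx i).le, hAx⟩
    rwa [vsub_eq_sub, add_sub_cancel_left, Submodule.smul_mem_iff _ ht] at hsub

theorem nullity_add_card_eq [Fintype m] (A : Matrix m n ℝ) :
    nullity A + Fintype.card m = nullity Aᵀ + Fintype.card n := by
  have hA := LinearMap.finrank_range_add_finrank_ker A.mulVecLin
  have hAt := LinearMap.finrank_range_add_finrank_ker Aᵀ.mulVecLin
  have hrank : Aᵀ.rank = A.rank := A.rank_transpose
  rw [Module.finrank_fintype_fun_eq_card] at hA hAt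
  unfold nullity Matrix.rank at *
  omega

end Polyhedron

theorem PGb_eq_nonneg_mulVec [Fintype E] (ends : E → Sym2 V) (b : V → ℝ) :
    PGb ends b = {y | 0 ≤ y ∧ incMatrix ends *ᵥ y = b} := by
  ext y
  simp [PGb, Pi.le_def, funext_iff, Matrix.mulVec, dotProduct, incMatrix]

theorem sum_ite_mem_sym2 [Fintype V] (z : V → ℝ) (u w : V) :
    ∑ v : V, (if v ∈ s(u, w) then z v else 0) = if u = w then z u else z u + z w := by
  have hpair : ∀ v, v ∈ s(u, w) ↔ v ∈ ({u, w} : Finset V) := by simp [Sym2.mem_iff]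
  simp_rw [hpair, Finset.sum_ite_mem, Finset.univ_inter]
  split_ifs with h
  · simp [h]
  · exact Finset.sum_pair h

theorem mem_ker_incMatrix_transpose_iff [Fintype V] (ends : E → Sym2 V) (z : V → ℝ) :
    z ∈ LinearMap.ker (incMatrix ends)ᵀ.mulVecLin ↔
      ∀ e u w, ends e = s(u, w) → z u + z w = 0 := by
  have hcol : ∀ e, ((incMatrix ends)ᵀ *ᵥ z) e = ∑ v : V, if v ∈ ends e then z v else 0 := by
    simp [Matrix.mulVec, dotProduct, incMatrix]
  simp only [LinearMap.mem_ker, Matrix.mulVecLin_apply, funext_iff, hcol, Pi.zero_apply]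
  constructor
  · intro h e u w he
    have h2 := h e
    rw [he, sum_ite_mem_sym2] at h2
    split_ifs at h2 with huw
    · rw [← huw, h2, add_zero]
    · exact h2
  · intro h e
    induction he : ends e using Sym2.ind with
    | h u w =>
      rw [sum_ite_mem_sym2]
      have h2 := h e u w he
      split_ifs with huw
      · subst huw; linarith
      · exact h2

theorem component_eq_of_edge {ends : E → Sym2 V} {e : E} {u w : V} (he : ends e = s(u, w)) :
    component ends u = component ends w := by
  ext x
  exact ⟨Relation.ReflTransGen.head ⟨e, he.trans Sym2.eq_swap⟩,
    Relation.ReflTransGen.head ⟨e, he⟩⟩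

section EdgeAlternating

variable {ends : E → Sym2 V} {z : V → ℝ}

theorem eq_zero_iff_of_reach (hz : ∀ e u w, ends e = s(u, w) → z u + z w = 0) {v w : V}
    (h : Reach ends v w) : z v = 0 ↔ z w = 0 := by
  induction h with
  | refl => rfl
  | tail _ hab ih =>
    obtain ⟨e, he⟩ := hab
    have hsum := hz e _ _ he
    exact ih.trans ⟨fun ha => by linarith, fun hb => by linarith⟩

theorem bipartiteOn_component_of_ne_zero (hz : ∀ e u w, ends e = s(u, w) → z u + z w = 0)
    {v : V} (hv : z v ≠ 0) : BipartiteOn ends (component ends v) := by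
  refine ⟨fun w => decide (0 < z w), fun e u w he hu => ?_⟩
  have hzu : z u ≠ 0 := fun h => hv ((eq_zero_iff_of_reach hz hu).2 h)
  have hzw : z w = -z u := by linarith [hz e u w he]
  rw [Ne, decide_eq_decide, hzw, neg_pos]
  rcases hzu.lt_or_gt with h | h <;> simp [h, not_lt.2 h.le]

end EdgeAlternating

def bipComponents (ends : E → Sym2 V) : Set (Set V) :=
  {S | (∃ v, S = component ends v) ∧ BipartiteOn ends S}

section BipComponents

variable {ends : E → Sym2 V}

noncomputable def bipBase (S : bipComponents ends) : V := S.2.1.choose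

theorem eq_component_bipBase (S : bipComponents ends) :
    (S : Set V) = component ends (bipBase S) :=
  S.2.1.choose_spec

noncomputable def bipSign (S : bipComponents ends) (v : V) : ℝ :=
  if S.2.2.choose v = S.2.2.choose (bipBase S) then 1 else -1

theorem bipSign_bipBase (S : bipComponents ends) : bipSign S (bipBase S) = 1 := if_pos rfl

theorem bipSign_eq_neg_of_edge (S : bipComponents ends) {e : E} {u w : V}
    (he : ends e = s(u, w)) (hu : u ∈ (S : Set V)) : bipSign S w = -bipSign S u := by
  have hcol := S.2.2.choose_spec e u w he hu
  revert hcol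
  unfold bipSign
  cases S.2.2.choose u <;> cases S.2.2.choose w <;> cases S.2.2.choose (bipBase S) <;> norm_num

noncomputable def bipExtend (c : bipComponents ends → ℝ) (v : V) : ℝ :=
  if h : component ends v ∈ bipComponents ends then bipSign ⟨_, h⟩ v * c ⟨_, h⟩ else 0

theorem bipExtend_add_bipExtend (c : bipComponents ends → ℝ) {e : E} {u w : V}
    (he : ends e = s(u, w)) : bipExtend c u + bipExtend c w = 0 := by
  unfold bipExtend
  rw [← component_eq_of_edge he]
  split_ifs with h
  · rw [bipSign_eq_neg_of_edge ⟨_, h⟩ he Relation.ReflTransGen.refl]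
    ring
  · ring

theorem bipExtend_bipBase (c : bipComponents ends → ℝ) (S : bipComponents ends) :
    bipExtend c (bipBase S) = c S := by
  unfold bipExtend
  rw [← eq_component_bipBase, dif_pos S.2, bipSign_bipBase, one_mul]

theorem eq_zero_of_forall_bipBase_eq_zero {z : V → ℝ}
    (hz : ∀ e u w, ends e = s(u, w) → z u + z w = 0)
    (h0 : ∀ S : bipComponents ends, z (bipBase S) = 0) (v : V) : z v = 0 := by
  by_cases hv : component ends v ∈ bipComponents ends
  · let S : bipComponents ends := ⟨_, hv⟩
    have hreach : Reach ends (bipBase S) v := by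
      show v ∈ component ends (bipBase S)
      rw [← eq_component_bipBase]
      exact Relation.ReflTransGen.refl
    exact (eq_zero_iff_of_reach hz hreach).1 (h0 S)
  · by_contra hzv
    exact hv ⟨⟨v, rfl⟩, bipartiteOn_component_of_ne_zero hz hzv⟩

end BipComponents

theorem nullity_incMatrix_transpose [Fintype V] (ends : E → Sym2 V) :
    nullity (incMatrix ends)ᵀ = numBipComp ends := by
  let evalBase : LinearMap.ker (incMatrix ends)ᵀ.mulVecLin →ₗ[ℝ] (bipComponents ends → ℝ) :=
    { toFun := fun z S => (z : V → ℝ) (bipBase S)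
      map_add' := fun _ _ => rfl
      map_smul' := fun _ _ => rfl }
  have hinj : Function.Injective evalBase := by
    refine (injective_iff_map_eq_zero _).2 fun z hz0 => Subtype.ext (funext fun v => ?_)
    exact eq_zero_of_forall_bipBase_eq_zero ((mem_ker_incMatrix_transpose_iff ends z).1 z.2)
      (congrFun hz0) v
  have hsurj : Function.Surjective evalBase := fun c =>
    ⟨⟨bipExtend c, (mem_ker_incMatrix_transpose_iff ends _).2
      fun _ _ _ he => bipExtend_add_bipExtend c he⟩, funext (bipExtend_bipBase c)⟩
  have : Fintype (bipComponents ends) := Fintype.ofFinite _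
  rw [nullity, (LinearEquiv.ofBijective evalBase ⟨hinj, hsurj⟩).finrank_eq,
    Module.finrank_fintype_fun_eq_card, Fintype.card_eq_nat_card, Nat.card_coe_set_eq]
  rfl

theorem dim_PGb_of_strictly_positive_general [Fintype V] [Fintype E] (ends : E → Sym2 V)
    (b : V → ℝ) (hpos : ∃ x ∈ PGb ends b, ∀ e : E, 0 < x e) :
    (Module.finrank ℝ (affineSpan ℝ (PGb ends b)).direction : ℤ)
      = (Fintype.card E : ℤ) - (Fintype.card V : ℤ) + (numBipComp ends : ℤ) := by
  obtain ⟨x, hx, hxpos⟩ := hpos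
  rw [PGb_eq_nonneg_mulVec] at hx ⊢
  have hdim : Module.finrank ℝ (affineSpan ℝ {y | 0 ≤ y ∧ incMatrix ends *ᵥ y = b}).direction
      = nullity (incMatrix ends) := by
    rw [direction_affineSpan, vectorSpan_nonneg_mulVec_eq_ker _ hxpos hx.2, nullity]
  have hcount := nullity_add_card_eq (incMatrix ends)
  rw [nullity_incMatrix_transpose] at hcount
  omega

theorem dim_PGb_of_strictly_positive [Fintype V] [Fintype E] (ends : E → Sym2 V)
    (b : V → ℝ) (hb : ∀ v, 0 ≤ b v)
    (hpos : ∃ x ∈ PGb ends b, ∀ e : E, 0 < x e) :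
    (Module.finrank ℝ (affineSpan ℝ (PGb ends b)).direction : ℤ)
      = (Fintype.card E : ℤ) - (Fintype.card V : ℤ) + (numBipComp ends : ℤ) :=
  dim_PGb_of_strictly_positive_general ends b hpos
end
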